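/- arXiv:0810.5638 — 11 statements merged into one kernel-verified Lean document; each statement's English description precedes it below -/
import Mathlib

section
/- Let p > 1 and ω > 0. There exists δ > 0 with F(δ) > 0 (hypothesis (H2)) if and only if ω < ω_p, where ω_p = p/(p+1)². -/
open Real Set Filter Topology

/-! In the variable `t = u ^ (p - 1)` one has `F u = u ^ 2 * (-ω / 2 + t / (p + 1) - t ^ 2 / (2 * p))`.
Completing the square, the quadratic factor is at most `(ω_p - ω) / 2`, with equality at
`t = p / (p + 1)`; as `u ↦ u ^ (p - 1)` maps `(0, ∞)` onto itself when `p > 1`, this value of `t`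
is attained, at `u = (p / (p + 1)) ^ (p - 1)⁻¹`. -/

section Potential

variable {p ω u : ℝ}

lemma quadratic_eq_sub_sq (hp : p ≠ 0) (hp₁ : p + 1 ≠ 0) (t : ℝ) :
    -ω / 2 + t / (p + 1) - t ^ 2 / (2 * p) =
      (p / (p + 1) ^ 2 - ω) / 2 - (t * (p + 1) - p) ^ 2 / (2 * p * (p + 1) ^ 2) := by
  field_simp
  ring

lemma potential_eq (hp : p ≠ 0) (hp₁ : p + 1 ≠ 0) (hu : 0 < u) :
    -ω * u ^ 2 / 2 + u ^ (p + 1) / (p + 1) - u ^ (2 * p) / (2 * p) =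
      u ^ 2 * ((p / (p + 1) ^ 2 - ω) / 2
        - (u ^ (p - 1) * (p + 1) - p) ^ 2 / (2 * p * (p + 1) ^ 2)) := by
  have h_add : u ^ (p + 1) = u ^ 2 * u ^ (p - 1) := by
    rw [show p + 1 = 2 + (p - 1) by ring, rpow_add hu, rpow_two]
  have h_mul : u ^ (2 * p) = u ^ 2 * (u ^ (p - 1)) ^ 2 := by
    rw [show 2 * p = 2 + (p - 1) * 2 by ring, rpow_add hu, rpow_two, rpow_mul hu.le, rpow_two]
  rw [h_add, h_mul, ← quadratic_eq_sub_sq hp hp₁]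
  ring

lemma potential_le (hp : 0 < p) (hu : 0 < u) :
    -ω * u ^ 2 / 2 + u ^ (p + 1) / (p + 1) - u ^ (2 * p) / (2 * p) ≤
      u ^ 2 * ((p / (p + 1) ^ 2 - ω) / 2) := by
  rw [potential_eq hp.ne' (by linarith) hu]
  gcongr
  exact sub_le_self _ (by positivity)

lemma potential_of_rpow_eq (hp : 0 < p) (hu : 0 < u) (hu_pow : u ^ (p - 1) = p / (p + 1)) :
    -ω * u ^ 2 / 2 + u ^ (p + 1) / (p + 1) - u ^ (2 * p) / (2 * p) =
      u ^ 2 * ((p / (p + 1) ^ 2 - ω) / 2) := by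
  have hp₁ : p + 1 ≠ 0 := by linarith
  rw [potential_eq hp.ne' hp₁ hu, hu_pow, div_mul_cancel₀ _ hp₁]
  simp

end Potential

theorem H2_iff_general (p ω : ℝ) (hp : 1 < p)
    (F : ℝ → ℝ)
    (hF : ∀ u > (0 : ℝ), F u = -ω * u ^ 2 / 2 + u ^ (p + 1) / (p + 1) - u ^ (2 * p) / (2 * p)) :
    (∃ δ > (0 : ℝ), 0 < F δ) ↔ ω < p / (p + 1) ^ 2 := by
  constructor
  · rintro ⟨δ, hδ, hFδ⟩
    rw [hF δ hδ] at hFδ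
    have h_pos := hFδ.trans_le (potential_le (by linarith) hδ)
    linarith [pos_of_mul_pos_right h_pos (by positivity)]
  · intro hω
    have h_base : 0 < p / (p + 1) := div_pos (by linarith) (by linarith)
    set δ := (p / (p + 1)) ^ (p - 1)⁻¹
    have hδ : 0 < δ := by positivity
    have hδ_pow : δ ^ (p - 1) = p / (p + 1) :=
      rpow_inv_rpow h_base.le (by linarith)
    refine ⟨δ, hδ, ?_⟩
    rw [hF δ hδ, potential_of_rpow_eq (by linarith) hδ hδ_pow]
    exact mul_pos (by positivity) (by linarith)

/-- For `F(u) = -ωu²/2 + u^(p+1)/(p+1) - u^(2p)/(2p)` with `p > 1` and `ω > 0`,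
there exists `δ > 0` with `F(δ) > 0` (H2) iff `ω < ω_p = p/(p+1)²`. -/
theorem H2_iff (p ω : ℝ) (hp : 1 < p) (hω : 0 < ω)
    (F : ℝ → ℝ)
    (hF : ∀ u > (0 : ℝ), F u = -ω * u ^ 2 / 2 + u ^ (p + 1) / (p + 1) - u ^ (2 * p) / (2 * p)) :
    (∃ δ > (0 : ℝ), 0 < F δ) ↔ ω < p / (p + 1) ^ 2 :=
  H2_iff_general p ω hp F hF
end

section
/- Let p > 1 and ω > 0. The function F has exactly two zeros in the open interval (0,∞) if and only if ω < ω_p, and F has at most one zero in (0,∞) if and only if ω ≥ ω_p, where ω_p = p/(p+1)². -/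
open Real Set Filter Topology

set_option maxHeartbeats 1000000 in
/-- For `F(u) = -ωu²/2 + u^(p+1)/(p+1) - u^(2p)/(2p)` with `p > 1`, `ω > 0`:
`F` has exactly two zeros in `(0,∞)` iff `ω < ω_p`, and at most one zero in `(0,∞)`
iff `ω ≥ ω_p`, where `ω_p = p/(p+1)²`. -/
theorem zeros_of_F (p ω : ℝ) (hp : 1 < p) (hω : 0 < ω)
    (F : ℝ → ℝ)
    (hF : ∀ u > (0 : ℝ), F u = -ω * u ^ 2 / 2 + u ^ (p + 1) / (p + 1) - u ^ (2 * p) / (2 * p)) :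
    ({u : ℝ | 0 < u ∧ F u = 0}.encard = 2 ↔ ω < p / (p + 1) ^ 2) ∧
    ({u : ℝ | 0 < u ∧ F u = 0}.encard ≤ 1 ↔ p / (p + 1) ^ 2 ≤ ω) := by
  have hp0 : (0:ℝ) < p := by linarith
  have hp1 : (0:ℝ) < p + 1 := by linarith
  have hpm : (0:ℝ) < p - 1 := by linarith
  set c : ℝ := p / (p + 1) with hc
  have hc0 : 0 < c := div_pos hp0 hp1
  set D : ℝ := p * (p / (p + 1) ^ 2 - ω) with hD
  have hDc : D = c ^ 2 - p * ω := by
    rw [hD, hc]; field_simp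
  -- key equivalence : F u = 0 iff quadratic in t = u^(p-1)
  have key : ∀ u > (0:ℝ), (F u = 0 ↔ (u ^ (p-1))^2 - 2*c*(u^(p-1)) + p*ω = 0) := by
    intro u hu
    have h2 : u ^ (p+1) = u ^ (p-1) * u ^ 2 := by
      rw [← Real.rpow_natCast u 2, ← Real.rpow_add hu]
      norm_num
      congr 1
      ring
    have h3 : u ^ (2*p) = (u ^ (p-1))^2 * u ^ 2 := by
      rw [← Real.rpow_natCast (u ^ (p-1)) 2, ← Real.rpow_natCast u 2,
        ← Real.rpow_mul hu.le, ← Real.rpow_add hu]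
      ring_nf
    rw [hF u hu, h2, h3]
    set t := u ^ (p-1) with ht
    have hid : -ω * u ^ 2 / 2 + t * u ^ 2 / (p + 1) - (t ^ 2 * u ^ 2) / (2 * p)
        = -(u ^ 2 / (2 * p)) * (t ^ 2 - 2 * c * t + p * ω) := by
      rw [hc]; field_simp; ring
    rw [hid, mul_eq_zero]
    have hne : -(u ^ 2 / (2 * p)) ≠ 0 := by
      have : 0 < u ^ 2 / (2 * p) := by positivity
      intro h; nlinarith
    exact or_iff_right hne
  -- image under u ↦ u^(p-1)
  have hST : (fun u : ℝ => u ^ (p-1)) '' {u : ℝ | 0 < u ∧ F u = 0}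
      = {t : ℝ | 0 < t ∧ t^2 - 2*c*t + p*ω = 0} := by
    ext t
    constructor
    · rintro ⟨u, ⟨hu, hFu⟩, rfl⟩
      exact ⟨Real.rpow_pos_of_pos hu _, (key u hu).1 hFu⟩
    · rintro ⟨ht, hq⟩
      have hupos : (0:ℝ) < t ^ (1/(p-1)) := Real.rpow_pos_of_pos ht _
      have he : (t ^ (1/(p-1))) ^ (p-1) = t := by
        rw [← Real.rpow_mul ht.le, one_div_mul_cancel hpm.ne', Real.rpow_one]
      refine ⟨t ^ (1/(p-1)), ⟨hupos, ?_⟩, he⟩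
      rw [key _ hupos, he]; exact hq
  have hinj : Set.InjOn (fun u : ℝ => u ^ (p-1)) {u : ℝ | 0 < u ∧ F u = 0} := by
    intro a ha b hb hab
    exact Real.rpow_left_injOn hpm.ne' (le_of_lt ha.1) (le_of_lt hb.1) hab
  have henc : {u : ℝ | 0 < u ∧ F u = 0}.encard
      = {t : ℝ | 0 < t ∧ t^2 - 2*c*t + p*ω = 0}.encard := by
    rw [← hST, hinj.encard_image]
  -- quadratic characterization
  have quad : ∀ t : ℝ, (t^2 - 2*c*t + p*ω = 0 ↔ (t - c)^2 = D) := by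
    intro t
    rw [hDc]
    constructor <;> intro h <;> nlinarith
  -- three cases
  have case2 : ω < p / (p + 1) ^ 2 → {u : ℝ | 0 < u ∧ F u = 0}.encard = 2 := by
    intro h
    have hD0 : 0 < D := by
      rw [hD]; have : 0 < p / (p+1)^2 - ω := by linarith
      positivity
    set s : ℝ := Real.sqrt D with hs
    have hs2 : s ^ 2 = D := Real.sq_sqrt hD0.le
    have hs0 : 0 < s := Real.sqrt_pos.mpr hD0
    have hsc : s < c := by
      have h1 : s ^ 2 < c ^ 2 := by rw [hs2, hDc]; nlinarith
      nlinarith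
    have hTeq : {t : ℝ | 0 < t ∧ t^2 - 2*c*t + p*ω = 0} = {c - s, c + s} := by
      ext t
      simp only [Set.mem_setOf_eq, Set.mem_insert_iff, Set.mem_singleton_iff]
      constructor
      · rintro ⟨ht, hq⟩
        have h1 : (t - c)^2 = s^2 := by rw [hs2]; exact (quad t).1 hq
        have h2 : (t - c - s) * (t - c + s) = 0 := by nlinarith
        rcases mul_eq_zero.1 h2 with h | h
        · right; linarith
        · left; linarith
      · rintro (rfl | rfl)
        · exact ⟨by linarith, (quad _).2 (by nlinarith)⟩
        · exact ⟨by linarith, (quad _).2 (by nlinarith)⟩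
    rw [henc, hTeq]
    exact Set.encard_pair (by intro h'; nlinarith)
  have case1 : ω = p / (p + 1) ^ 2 → {u : ℝ | 0 < u ∧ F u = 0}.encard = 1 := by
    intro h
    have hD0 : D = 0 := by rw [hD, h]; ring
    have hTeq : {t : ℝ | 0 < t ∧ t^2 - 2*c*t + p*ω = 0} = {c} := by
      ext t
      simp only [Set.mem_setOf_eq, Set.mem_singleton_iff]
      constructor
      · rintro ⟨ht, hq⟩
        have h1 : (t - c)^2 = 0 := by rw [← hD0]; exact (quad t).1 hq
        have := pow_eq_zero_iff (n := 2) (by norm_num) |>.1 h1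
        linarith
      · rintro rfl
        exact ⟨hc0, (quad _).2 (by rw [hD0]; ring)⟩
    rw [henc, hTeq, Set.encard_singleton]
  have case0 : p / (p + 1) ^ 2 < ω → {u : ℝ | 0 < u ∧ F u = 0}.encard = 0 := by
    intro h
    have hD0 : D < 0 := by
      rw [hD]; have : p / (p+1)^2 - ω < 0 := by linarith
      nlinarith
    have hTeq : {t : ℝ | 0 < t ∧ t^2 - 2*c*t + p*ω = 0} = ∅ := by
      ext t
      simp only [Set.mem_setOf_eq, Set.mem_empty_iff_false, iff_false, not_and]
      intro ht hq
      have h1 : (t - c)^2 = D := (quad t).1 hq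
      nlinarith [sq_nonneg (t - c)]
    rw [henc, hTeq, Set.encard_empty]
  constructor
  · constructor
    · intro h
      by_contra hcon
      push_neg at hcon
      rcases eq_or_lt_of_le hcon with h' | h'
      · rw [case1 h'.symm] at h; norm_num at h
      · rw [case0 h'] at h; norm_num at h
    · exact case2
  · constructor
    · intro h
      by_contra hcon
      push_neg at hcon
      rw [case2 hcon] at h
      norm_num at h
    · intro h
      rcases eq_or_lt_of_le h with h' | h'
      · rw [case1 h'.symm]
      · rw [case0 h']; norm_num
end

section
/- Let p > 1 and 0 < ω < ω_p, where ω_p = p/(p+1)². Then 1 − (p+1)²ω/p > 0, the number β = ((p/(p+1))·(1−√(1−(p+1)²ω/p)))^{1/(p−1)} is positive, F(β) = 0, and F(u) < 0 for all 0 < u < β; that is, β is the first zero of F in (0,∞). -/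
open Real

/-!
Put `y = u ^ (p - 1)`. Then `F u = -(u² / 2p) · (y² - 2p/(p+1) · y + pω)`, and the quadratic in `y`
has the real roots `p/(p+1) · (1 ∓ s)` with `s = √(1 - (p+1)²ω/p) ∈ [0, 1)`. The smaller root is
positive and equals `β ^ (p - 1)`; below it both factors are negative, so `F < 0` on `(0, β)`.
-/

lemma one_sub_sq_add_one_mul_div_pos {p ω : ℝ} (hp : 0 < p) (hωp : ω < p / (p + 1) ^ 2) :
    0 < 1 - (p + 1) ^ 2 * ω / p := by
  rw [sub_pos, div_lt_one hp, ← lt_div_iff₀' (by positivity)]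
  exact hωp

lemma rpow_add_one_eq_sq_mul {u : ℝ} (hu : 0 < u) (p : ℝ) :
    u ^ (p + 1) = u ^ 2 * u ^ (p - 1) := by
  rw [show p + 1 = 2 + (p - 1) by ring, rpow_add hu, rpow_two]

lemma rpow_two_mul_eq_sq_mul_sq {u : ℝ} (hu : 0 < u) (p : ℝ) :
    u ^ (2 * p) = u ^ 2 * (u ^ (p - 1)) ^ 2 := by
  rw [show 2 * p = 2 + ((p - 1) + (p - 1)) by ring, rpow_add hu, rpow_add hu, rpow_two]
  ring

lemma neg_sq_div_add_rpow_sub_rpow_eq_mul {p ω s u : ℝ} (hp : 0 < p) (hu : 0 < u)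
    (hs : s ^ 2 = 1 - (p + 1) ^ 2 * ω / p) :
    -ω * u ^ 2 / 2 + u ^ (p + 1) / (p + 1) - u ^ (2 * p) / (2 * p) =
      -(u ^ 2 / (2 * p)) *
        ((u ^ (p - 1) - p / (p + 1) * (1 - s)) * (u ^ (p - 1) - p / (p + 1) * (1 + s))) := by
  have hp1 : p + 1 ≠ 0 := by positivity
  rw [rpow_add_one_eq_sq_mul hu, rpow_two_mul_eq_sq_mul_sq hu]
  field_simp at hs ⊢
  linear_combination (-p) * hs

/-- For `p > 1` and `0 < ω < ω_p = p/(p+1)²`: `1 - (p+1)²ω/p > 0`, `β > 0`, `F(β) = 0`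
and `F < 0` on `(0,β)`; that is, `β` is the first zero of `F` in `(0,∞)`. -/
theorem beta_first_zero_of_F (p ω : ℝ) (hp : 1 < p) (hω : 0 < ω) (hωp : ω < p / (p + 1) ^ 2)
    (F : ℝ → ℝ)
    (hF : ∀ u > (0 : ℝ), F u = -ω * u ^ 2 / 2 + u ^ (p + 1) / (p + 1) - u ^ (2 * p) / (2 * p))
    (β : ℝ)
    (hβ : β = (p / (p + 1) * (1 - Real.sqrt (1 - (p + 1) ^ 2 * ω / p))) ^ (1 / (p - 1))) :
    0 < 1 - (p + 1) ^ 2 * ω / p ∧ 0 < β ∧ F β = 0 ∧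
    (∀ u : ℝ, 0 < u → u < β → F u < 0) := by
  have hp0 : 0 < p := by linarith
  have hD := one_sub_sq_add_one_mul_div_pos hp0 hωp
  set s := √(1 - (p + 1) ^ 2 * ω / p)
  have hs2 : s ^ 2 = 1 - (p + 1) ^ 2 * ω / p := sq_sqrt hD.le
  have hs1 : s < 1 := by
    rw [sqrt_lt' one_pos, one_pow, sub_lt_self_iff]
    positivity
  have hb : 0 < p / (p + 1) * (1 - s) := mul_pos (by positivity) (sub_pos.2 hs1)
  have hβpos : 0 < β := hβ ▸ rpow_pos_of_pos hb _
  have hβb : β ^ (p - 1) = p / (p + 1) * (1 - s) := by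
    rw [hβ, ← rpow_mul hb.le, one_div_mul_cancel (by linarith), rpow_one]
  refine ⟨hD, hβpos, ?_, fun u hu huβ => ?_⟩
  · rw [hF β hβpos, neg_sq_div_add_rpow_sub_rpow_eq_mul hp0 hβpos hs2, hβb, sub_self]
    ring
  · have hub : u ^ (p - 1) < p / (p + 1) * (1 - s) :=
      hβb ▸ rpow_lt_rpow hu.le huβ (by linarith)
    have hbc : p / (p + 1) * (1 - s) ≤ p / (p + 1) * (1 + s) :=
      mul_le_mul_of_nonneg_left (by linarith [sqrt_nonneg (1 - (p + 1) ^ 2 * ω / p)])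
        (by positivity)
    rw [hF u hu, neg_sq_div_add_rpow_sub_rpow_eq_mul hp0 hu hs2]
    exact mul_neg_of_neg_of_pos (neg_neg_of_pos (by positivity))
      (mul_pos_of_neg_of_neg (by linarith) (by linarith))
end

section
/- Let p > 1 and 0 < ω < ω_p, where ω_p = p/(p+1)². Then b < β < c, where b = ((1−√(1−4ω))/2)^{1/(p−1)}, c = ((1+√(1−4ω))/2)^{1/(p−1)}, and β = ((p/(p+1))·(1−√(1−(p+1)²ω/p)))^{1/(p−1)}. -/
open Real Set Filter Topology

set_option maxHeartbeats 1000000 in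
/-- For `p > 1` and `0 < ω < ω_p = p/(p+1)²`, one has `b < β < c`. -/
theorem b_lt_beta_lt_c (p ω : ℝ) (hp : 1 < p) (hω : 0 < ω) (hωp : ω < p / (p + 1) ^ 2)
    (b c β : ℝ)
    (hb : b = ((1 - Real.sqrt (1 - 4 * ω)) / 2) ^ (1 / (p - 1)))
    (hc : c = ((1 + Real.sqrt (1 - 4 * ω)) / 2) ^ (1 / (p - 1)))
    (hβ : β = (p / (p + 1) * (1 - Real.sqrt (1 - (p + 1) ^ 2 * ω / p))) ^ (1 / (p - 1))) :
    b < β ∧ β < c := by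
  have hp1 : (0:ℝ) < p + 1 := by linarith
  have hp0 : (0:ℝ) < p := by linarith
  have hωp' : ω * (p + 1) ^ 2 < p := by
    have := (div_lt_div_iff₀ (by positivity) (by positivity)).mp
      (show ω / 1 < p / (p+1)^2 by simpa using hωp)
    linarith
  have h4ω : 4 * ω < 1 := by nlinarith [sq_nonneg (p - 1), sq_nonneg (p+1)]
  set s := Real.sqrt (1 - 4 * ω) with hsdef
  have hs2 : s ^ 2 = 1 - 4 * ω := Real.sq_sqrt (by linarith)
  have hs_pos : 0 < s := Real.sqrt_pos.mpr (by linarith)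
  have hs1 : s < 1 := by
    nlinarith [hs2]
  set t := Real.sqrt (1 - (p + 1) ^ 2 * ω / p) with htdef
  have hKlt : (p + 1) ^ 2 * ω / p < 1 := by
    rw [div_lt_one hp0]; nlinarith
  have hKpos : 0 < (p + 1) ^ 2 * ω / p := by positivity
  have ht2 : t ^ 2 = 1 - (p + 1) ^ 2 * ω / p := Real.sq_sqrt (by linarith)
  have ht_pos : 0 < t := Real.sqrt_pos.mpr (by linarith)
  have ht1 : t < 1 := by nlinarith [ht2]
  set B := (1 - s) / 2 with hBdef
  set C := (1 + s) / 2 with hCdef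
  set a := p / (p + 1) * (1 - t) with hadef
  have hBpos : 0 < B := by rw [hBdef]; linarith
  have hapos : 0 < a := by
    rw [hadef]
    have h1t : 0 < 1 - t := by linarith
    positivity
  have hBC : B * C = ω := by
    rw [hBdef, hCdef]; nlinarith [hs2]
  have hBCsum : B + C = 1 := by rw [hBdef, hCdef]; ring
  -- key: a*(1-a) - ω = (p-1)*a*t/(p+1) > 0
  have ht2' : t ^ 2 * p = p - (p + 1) ^ 2 * ω := by
    rw [ht2, sub_mul, one_mul, div_mul_cancel₀ _ hp0.ne']
  have h1 : (p + 1) * a = p * (1 - t) := by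
    rw [hadef]; field_simp
  have heq : (p + 1) ^ 2 * ω = p * (1 - t ^ 2) := by nlinarith [ht2']
  have hid : (a * (1 - a) - ω) * (p + 1) ^ 2 = p * (1 - t) * t * (p - 1) := by
    linear_combination (-((p + 1) * a - (p + 1) + p * (1 - t))) * h1 - heq
  have hkey' : 0 < a * (1 - a) - ω := by
    have hP : 0 < p * (1 - t) * t * (p - 1) := by
      have h1t : 0 < 1 - t := by linarith
      exact mul_pos (mul_pos (mul_pos hp0 h1t) ht_pos) (by linarith)
    have hsq : 0 < (p + 1) ^ 2 := by positivity
    nlinarith [hid, hP, hsq]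
  -- hence (a - B) * (a - C) < 0, and since B < C, B < a < C
  have hprod : (a - B) * (a - C) < 0 := by nlinarith
  have hBltC : B < C := by rw [hBdef, hCdef]; linarith
  have hBa : B < a := by nlinarith
  have haC : a < C := by nlinarith
  have hexp : 0 < 1 / (p - 1) := by
    have : 0 < p - 1 := by linarith
    positivity
  constructor
  · rw [hb, hβ]
    exact Real.rpow_lt_rpow hBpos.le hBa hexp
  · rw [hβ, hc]
    exact Real.rpow_lt_rpow hapos.le haC hexp
end

section
/- Let p > 1 and 0 < ω < ω_p, where ω_p = p/(p+1)². Then f(β) > 0, where β = ((p/(p+1))·(1−√(1−(p+1)²ω/p)))^{1/(p−1)}. -/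
open Real Set Filter Topology

/-- For `p > 1` and `0 < ω < ω_p = p/(p+1)²`, one has `f(β) > 0`. -/
theorem f_beta_pos (p ω : ℝ) (hp : 1 < p) (hω : 0 < ω) (hωp : ω < p / (p + 1) ^ 2)
    (f : ℝ → ℝ) (hf : ∀ u > (0 : ℝ), f u = -ω * u + u ^ p - u ^ (2 * p - 1))
    (β : ℝ)
    (hβ : β = (p / (p + 1) * (1 - Real.sqrt (1 - (p + 1) ^ 2 * ω / p))) ^ (1 / (p - 1))) :
    0 < f β := by
  have hp0 : (0:ℝ) < p := by linarith
  have hp1 : (0:ℝ) < p + 1 := by linarith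
  set s : ℝ := Real.sqrt (1 - (p + 1) ^ 2 * ω / p) with hs_def
  set b : ℝ := p / (p + 1) * (1 - s) with hb_def
  have hωP : ω * (p + 1) ^ 2 < p := by
    have := (lt_div_iff₀ (by positivity : (0:ℝ) < (p+1)^2)).mp hωp
    linarith
  have harg : 0 < 1 - (p + 1) ^ 2 * ω / p := by
    rw [sub_pos, div_lt_one hp0]; nlinarith
  have harg1 : 1 - (p + 1) ^ 2 * ω / p < 1 := by
    have : 0 < (p + 1) ^ 2 * ω / p := by positivity
    linarith
  have hs0 : 0 < s := Real.sqrt_pos.mpr harg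
  have hs1 : s < 1 := by
    have := Real.sqrt_lt_sqrt harg.le harg1
    simpa [hs_def] using this
  have hssq : s ^ 2 = 1 - (p + 1) ^ 2 * ω / p := Real.sq_sqrt harg.le
  have hs1' : (0:ℝ) < 1 - s := by linarith
  have hb0 : 0 < b := by rw [hb_def]; positivity
  have hβpos : 0 < β := by rw [hβ]; positivity
  -- key: ω < b - b^2
  have hb_eq : b * (p + 1) = p * (1 - s) := by rw [hb_def]; field_simp
  have hω_eq : ω * (p + 1) ^ 2 = p * (1 - s ^ 2) := by
    rw [hssq]; field_simp; ring
  have h2 : b ^ 2 * (p + 1) ^ 2 = p ^ 2 * (1 - s) ^ 2 := by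
    linear_combination (b * (p + 1) + p * (1 - s)) * hb_eq
  have hid : (b - b ^ 2 - ω) * (p + 1) ^ 2 = p * (1 - s) * s * (p - 1) := by
    linear_combination (p + 1) * hb_eq - h2 - hω_eq
  have hpos : 0 < (b - b ^ 2 - ω) * (p + 1) ^ 2 := by
    rw [hid]
    have hp1' : (0:ℝ) < p - 1 := by linarith
    positivity
  have hkey : ω < b - b ^ 2 := by nlinarith [sq_nonneg (p + 1)]
  have hβb : β ^ (p - 1) = b := by
    rw [hβ, ← Real.rpow_mul hb0.le, one_div,
      inv_mul_cancel₀ (by linarith : p - 1 ≠ 0), Real.rpow_one]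
  have hβp : β ^ p = β * b := by
    have h : p = 1 + (p - 1) := by ring
    rw [h, Real.rpow_add hβpos, Real.rpow_one, hβb]
  have hβ2p : β ^ (2 * p - 1) = β * (b * b) := by
    have h : 2 * p - 1 = 1 + (p - 1) + (p - 1) := by ring
    rw [h, Real.rpow_add hβpos, Real.rpow_add hβpos, Real.rpow_one, hβb]
    ring
  rw [hf β hβpos, hβp, hβ2p]
  have h1 : (0:ℝ) < b - b ^ 2 - ω := by linarith
  nlinarith [mul_pos hβpos h1]
end

section
/- Let p > 1 and 0 < ω < ω_p, where ω_p = p/(p+1)². Then α ≤ β if and only if ω ≥ a_p, where α = (p/(2(2p−1)))^{1/(p−1)}, β = ((p/(p+1))·(1−√(1−(p+1)²ω/p)))^{1/(p−1)}, and a_p = p(7p−5)/(4(p+1)(2p−1)²). -/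
open Real Set Filter Topology

set_option maxHeartbeats 1000000 in
/-- For `p > 1` and `0 < ω < ω_p = p/(p+1)²`: `α ≤ β` iff `ω ≥ a_p`, where
`a_p = p(7p-5)/(4(p+1)(2p-1)²)`. -/
theorem alpha_le_beta_iff (p ω : ℝ) (hp : 1 < p) (hω : 0 < ω) (hωp : ω < p / (p + 1) ^ 2)
    (α β : ℝ)
    (hα : α = (p / (2 * (2 * p - 1))) ^ (1 / (p - 1)))
    (hβ : β = (p / (p + 1) * (1 - Real.sqrt (1 - (p + 1) ^ 2 * ω / p))) ^ (1 / (p - 1))) :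
    α ≤ β ↔ p * (7 * p - 5) / (4 * (p + 1) * (2 * p - 1) ^ 2) ≤ ω := by
  have hp0 : (0:ℝ) < p := by linarith
  have hp1 : (0:ℝ) < p + 1 := by linarith
  have h2p : (0:ℝ) < 2 * (2 * p - 1) := by linarith
  have hωp' : (p + 1) ^ 2 * ω < p := by
    have := (lt_div_iff₀ (by positivity)).mp hωp
    linarith
  have harg0 : 0 ≤ 1 - (p + 1) ^ 2 * ω / p := by
    rw [sub_nonneg, div_le_one hp0]; linarith
  obtain ⟨s, hs_def⟩ : ∃ s, s = Real.sqrt (1 - (p + 1) ^ 2 * ω / p) := ⟨_, rfl⟩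
  rw [← hs_def] at hβ
  have hs0 : 0 ≤ s := hs_def ▸ Real.sqrt_nonneg _
  have hs2 : s ^ 2 = 1 - (p + 1) ^ 2 * ω / p := by
    rw [hs_def]; exact Real.sq_sqrt harg0
  have hs2' : p * s ^ 2 = p - (p + 1) ^ 2 * ω := by
    rw [hs2]; field_simp
  have hs1 : s < 1 := by
    nlinarith [sq_nonneg s, mul_pos (mul_pos (pow_pos hp1 2) hω) (inv_pos.mpr hp0),
      (div_pos (mul_pos (pow_pos hp1 2) hω) hp0)]
  have hx : (0:ℝ) ≤ p / (2 * (2 * p - 1)) := by positivity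
  have hy : (0:ℝ) ≤ p / (p + 1) * (1 - s) := by
    have : 0 ≤ 1 - s := by linarith
    positivity
  have hexp : 0 < 1 / (p - 1) := by
    have : 0 < p - 1 := by linarith
    positivity
  rw [hα, hβ, Real.rpow_le_rpow_iff hx hy hexp]
  have key : p / (2 * (2 * p - 1)) ≤ p / (p + 1) * (1 - s) ↔
      p * (p + 1) ≤ p * (1 - s) * (2 * (2 * p - 1)) := by
    rw [show p / (p + 1) * (1 - s) = p * (1 - s) / (p + 1) by ring,
      div_le_div_iff₀ h2p hp1]
  rw [key]
  constructor
  · intro h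
    have hst : s * (2 * (2 * p - 1)) ≤ 3 * p - 3 := by nlinarith
    have hsq : (s * (2 * (2 * p - 1))) ^ 2 ≤ (3 * p - 3) ^ 2 := by
      have h3 : (0:ℝ) ≤ 3 * p - 3 := by linarith
      nlinarith [mul_nonneg hs0 h2p.le]
    rw [div_le_iff₀ (by nlinarith)]
    nlinarith [hs2']
  · intro h
    rw [div_le_iff₀ (by nlinarith)] at h
    have hsq0 : p * (s ^ 2 * (2 * (2 * p - 1)) ^ 2) ≤ p * (3 * p - 3) ^ 2 := by
      rw [show p * (s ^ 2 * (2 * (2 * p - 1)) ^ 2) = p * s ^ 2 * (2 * (2 * p - 1)) ^ 2 by ring,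
        hs2']
      nlinarith [mul_le_mul_of_nonneg_left h hp1.le]
    have hsq1 : s ^ 2 * (2 * (2 * p - 1)) ^ 2 ≤ (3 * p - 3) ^ 2 :=
      le_of_mul_le_mul_left hsq0 hp0
    have hsq : s ^ 2 ≤ ((3 * p - 3) / (2 * (2 * p - 1))) ^ 2 := by
      rw [div_pow, le_div_iff₀ (pow_pos h2p 2)]
      exact hsq1
    have hst : s ≤ (3 * p - 3) / (2 * (2 * p - 1)) := by
      have := Real.sqrt_le_sqrt hsq
      rwa [Real.sqrt_sq hs0, Real.sqrt_sq (div_nonneg (by linarith) h2p.le)] at this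
    rw [le_div_iff₀ h2p] at hst
    nlinarith
end

section
/- Let p > 1 and a_p ≤ ω < ω_p, where ω_p = p/(p+1)² and a_p = p(7p−5)/(4(p+1)(2p−1)²). Then k(u) := f'(u)·(u−β) − f(u) < 0 for all u in the open interval (β, c), where f'(u) = −ω + p·u^{p−1} − (2p−1)·u^{2(p−1)}, β = ((p/(p+1))·(1−√(1−(p+1)²ω/p)))^{1/(p−1)}, and c = ((1+√(1−4ω))/2)^{1/(p−1)}. -/
/-!
Put `r = √(1 - (p + 1)² ω / p)`, so that `r ∈ (0, 1)`, `ω = p (1 - r²) / (p + 1)²` and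
`s := β^(p-1) = p (1 - r) / (p + 1)`. The lower bound `a_p ≤ ω` says exactly
`r ≤ 3 (p - 1) / (2 (2p - 1))`, i.e. `s ≥ p / (2 (2p - 1))`, and
`f'' u = (p - 1) u^(p-2) (p - 2 (2p - 1) u^(p-1))` is negative once `u^(p-1) > p / (2 (2p - 1))`.
So `f` is strictly concave on `[β, ∞)` and lies strictly below its tangent at `u > β`:
`f β < f u + f' u (β - u)`. Hence `k u < -f β = -β p (p - 1) r (1 - r) / (p + 1)² < 0`.
-/

open Real Set Filter Topology

theorem StrictConcaveOn.mul_sub_lt_sub_of_hasDerivAt {S : Set ℝ} {f : ℝ → ℝ} {x y f' : ℝ}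
    (hf : StrictConcaveOn ℝ S f) (hx : x ∈ S) (hy : y ∈ S) (hxy : x < y)
    (hderiv : HasDerivAt f f' y) : f' * (y - x) < f y - f x := by
  have h := hf.lt_slope_of_hasDerivAt hx hy hxy hderiv
  rwa [slope_def_field, lt_div_iff₀ (sub_pos.2 hxy)] at h

namespace DoublePower

variable {ω p r t u : ℝ}

noncomputable def nonlin (ω p u : ℝ) : ℝ := -ω * u + u ^ p - u ^ (2 * p - 1)

noncomputable def nonlinDeriv (ω p u : ℝ) : ℝ :=
  -ω + p * u ^ (p - 1) - (2 * p - 1) * u ^ (2 * (p - 1))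

theorem hasDerivAt_nonlin (hu : 0 < u) : HasDerivAt (nonlin ω p) (nonlinDeriv ω p u) u := by
  refine HasDerivAt.congr_deriv (f := nonlin ω p) ((((hasDerivAt_id u).const_mul (-ω)).add
    (hasDerivAt_rpow_const (p := p) (Or.inl hu.ne'))).sub
    (hasDerivAt_rpow_const (p := 2 * p - 1) (Or.inl hu.ne'))) ?_
  rw [nonlinDeriv, show 2 * p - 1 - 1 = 2 * (p - 1) by ring]
  simp

theorem hasDerivAt_nonlinDeriv (hu : 0 < u) : HasDerivAt (nonlinDeriv ω p)
    ((p - 1) * u ^ (p - 2) * (p - 2 * (2 * p - 1) * u ^ (p - 1))) u := by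
  refine HasDerivAt.congr_deriv (f := nonlinDeriv ω p)
    ((((hasDerivAt_rpow_const (p := p - 1) (Or.inl hu.ne')).const_mul p).const_add (-ω)).sub
      ((hasDerivAt_rpow_const (p := 2 * (p - 1)) (Or.inl hu.ne')).const_mul (2 * p - 1))) ?_
  have h : u ^ (2 * (p - 1) - 1) = u ^ (p - 2) * u ^ (p - 1) := by
    rw [← rpow_add hu]; ring_nf
  rw [h, show p - 1 - 1 = p - 2 by ring]
  ring

theorem strictConcaveOn_nonlin (hp : 1 < p) (ht : 0 < t)
    (hthr : p ≤ 2 * (2 * p - 1) * t ^ (p - 1)) : StrictConcaveOn ℝ (Ici t) (nonlin ω p) := by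
  have hanti : StrictAntiOn (nonlinDeriv ω p) (Ioi t) := by
    refine strictAntiOn_of_deriv_neg (convex_Ioi t)
      (fun u hu ↦ (hasDerivAt_nonlinDeriv (ht.trans hu)).continuousAt.continuousWithinAt)
      fun u hu ↦ ?_
    rw [interior_Ioi] at hu
    have hu0 : 0 < u := ht.trans hu
    rw [(hasDerivAt_nonlinDeriv hu0).deriv]
    have hpow : t ^ (p - 1) < u ^ (p - 1) := rpow_lt_rpow ht.le hu (by linarith)
    refine mul_neg_of_pos_of_neg (mul_pos (by linarith) (rpow_pos_of_pos hu0 _)) ?_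
    nlinarith
  refine StrictAntiOn.strictConcaveOn_of_deriv (convex_Ici t)
    (fun u hu ↦ (hasDerivAt_nonlin (ht.trans_le hu)).continuousAt.continuousWithinAt) ?_
  rw [interior_Ici]
  exact hanti.congr fun u hu ↦ (hasDerivAt_nonlin (ht.trans hu)).deriv.symm

theorem nonlin_eq_mul (ht : 0 < t) :
    nonlin ω p t = t * (-ω + t ^ (p - 1) - (t ^ (p - 1)) ^ 2) := by
  have h1 : t ^ p = t * t ^ (p - 1) := by simpa using rpow_add ht 1 (p - 1)
  have h2 : t ^ (2 * p - 1) = t * (t ^ (p - 1)) ^ 2 := by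
    rw [show 2 * p - 1 = 1 + (p - 1) + (p - 1) by ring, rpow_add ht, rpow_add ht, rpow_one]; ring
  rw [nonlin, h1, h2]; ring

theorem sqrt_disc_mem_Ioo (hp : 0 < p) (hω : 0 < ω) (hωp : ω < p / (p + 1) ^ 2) :
    √(1 - (p + 1) ^ 2 * ω / p) ∈ Ioo 0 1 := by
  have h : (p + 1) ^ 2 * ω / p < 1 := by
    rw [div_lt_one hp, ← lt_div_iff₀' (by positivity)]; exact hωp
  constructor
  · exact sqrt_pos.2 (by linarith)
  · rw [sqrt_lt' one_pos, one_pow]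
    linarith [show 0 < (p + 1) ^ 2 * ω / p by positivity]

theorem mul_sq_sqrt_disc (hp : 0 < p) (hωp : ω ≤ p / (p + 1) ^ 2) :
    (p + 1) ^ 2 * ω = p * (1 - √(1 - (p + 1) ^ 2 * ω / p) ^ 2) := by
  have h : (p + 1) ^ 2 * ω / p ≤ 1 := by
    rw [div_le_one hp, ← le_div_iff₀' (by positivity)]; exact hωp
  rw [sq_sqrt (by linarith)]
  field_simp
  ring

theorem sqrt_disc_le (hp : 1 < p) (hω : p * (7 * p - 5) / (4 * (p + 1) * (2 * p - 1) ^ 2) ≤ ω) :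
    √(1 - (p + 1) ^ 2 * ω / p) ≤ 3 * (p - 1) / (2 * (2 * p - 1)) := by
  have hp0 : p ≠ 0 := by linarith
  have h2p : (2 * (2 * p - 1)) ^ 2 ≠ 0 := by
    apply pow_ne_zero; linarith
  have e : 1 - (3 * (p - 1) / (2 * (2 * p - 1))) ^ 2
      = (p + 1) ^ 2 * (p * (7 * p - 5) / (4 * (p + 1) * (2 * p - 1) ^ 2)) / p := by
    rw [div_pow, one_sub_div h2p]
    field_simp
    ring
  rw [sqrt_le_left (div_nonneg (by linarith) (by linarith)), sub_le_comm, e]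
  gcongr

theorem le_two_mul_mul_one_sub (hp : 1 < p) (hr : r ≤ 3 * (p - 1) / (2 * (2 * p - 1))) :
    p ≤ 2 * (2 * p - 1) * (p / (p + 1) * (1 - r)) := by
  have e : 2 * (2 * p - 1) * (p / (p + 1) * (1 - r)) - p
      = p * (3 * (p - 1) - r * (2 * (2 * p - 1))) / (p + 1) := by
    field_simp
    ring
  rw [le_div_iff₀ (by linarith)] at hr
  have : 0 ≤ p * (3 * (p - 1) - r * (2 * (2 * p - 1))) / (p + 1) :=
    div_nonneg (mul_nonneg (by linarith) (by linarith)) (by linarith)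
  linarith

theorem neg_add_sub_sq_pos (hp : 1 < p) (hr₀ : 0 < r) (hr₁ : r < 1)
    (hω : (p + 1) ^ 2 * ω = p * (1 - r ^ 2)) :
    0 < -ω + p / (p + 1) * (1 - r) - (p / (p + 1) * (1 - r)) ^ 2 := by
  have key : -ω + p / (p + 1) * (1 - r) - (p / (p + 1) * (1 - r)) ^ 2
      = p * (p - 1) * r * (1 - r) / (p + 1) ^ 2 := by
    field_simp
    linear_combination (-1) * hω
  rw [key]
  have : 0 < 1 - r := by linarith
  have : 0 < p - 1 := by linarith
  positivity

end DoublePower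

open DoublePower in
theorem k_neg_general (p ω : ℝ) (hp : 1 < p)
    (hω₁ : p * (7 * p - 5) / (4 * (p + 1) * (2 * p - 1) ^ 2) ≤ ω)
    (hω₂ : ω < p / (p + 1) ^ 2)
    (f f' : ℝ → ℝ)
    (hf : ∀ u > (0 : ℝ), f u = -ω * u + u ^ p - u ^ (2 * p - 1))
    (hf' : ∀ u > (0 : ℝ), f' u = -ω + p * u ^ (p - 1) - (2 * p - 1) * u ^ (2 * (p - 1)))
    (β c : ℝ)
    (hβ : β = (p / (p + 1) * (1 - Real.sqrt (1 - (p + 1) ^ 2 * ω / p))) ^ (1 / (p - 1))) :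
    ∀ u ∈ Set.Ioo β c, f' u * (u - β) - f u < 0 := by
  rintro u ⟨hβu, -⟩
  set r := √(1 - (p + 1) ^ 2 * ω / p)
  set s := p / (p + 1) * (1 - r)
  have hp₀ : 0 < p := by linarith
  have hω₀ : 0 < ω := lt_of_lt_of_le (by apply div_pos <;> nlinarith) hω₁
  obtain ⟨hr₀, hr₁⟩ := sqrt_disc_mem_Ioo hp₀ hω₀ hω₂
  have hs : 0 < s := mul_pos (by positivity) (by linarith)
  have hβ₀ : 0 < β := hβ ▸ rpow_pos_of_pos hs _
  have hβs : β ^ (p - 1) = s := by rw [hβ, one_div, rpow_inv_rpow hs.le (by linarith)]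
  have hconcave : StrictConcaveOn ℝ (Ici β) (nonlin ω p) :=
    strictConcaveOn_nonlin hp hβ₀ (hβs ▸ le_two_mul_mul_one_sub hp (sqrt_disc_le hp hω₁))
  have hfβ : 0 < nonlin ω p β := by
    rw [nonlin_eq_mul hβ₀, hβs]
    exact mul_pos hβ₀ (neg_add_sub_sq_pos hp hr₀ hr₁ (mul_sq_sqrt_disc hp₀ hω₂.le))
  have htangent := hconcave.mul_sub_lt_sub_of_hasDerivAt self_mem_Ici hβu.le hβu
    (hasDerivAt_nonlin (hβ₀.trans hβu))
  rw [hf u (hβ₀.trans hβu), hf' u (hβ₀.trans hβu)]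
  change nonlinDeriv ω p u * (u - β) - nonlin ω p u < 0
  linarith

/-- For `p > 1` and `a_p ≤ ω < ω_p`: `k(u) = f'(u)(u - β) - f(u) < 0` for all `u ∈ (β, c)`,
where `f'(u) = -ω + p u^(p-1) - (2p-1) u^(2(p-1))`. -/
theorem k_neg (p ω : ℝ) (hp : 1 < p)
    (hω₁ : p * (7 * p - 5) / (4 * (p + 1) * (2 * p - 1) ^ 2) ≤ ω)
    (hω₂ : ω < p / (p + 1) ^ 2)
    (f f' : ℝ → ℝ)
    (hf : ∀ u > (0 : ℝ), f u = -ω * u + u ^ p - u ^ (2 * p - 1))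
    (hf' : ∀ u > (0 : ℝ), f' u = -ω + p * u ^ (p - 1) - (2 * p - 1) * u ^ (2 * (p - 1)))
    (β c : ℝ)
    (hβ : β = (p / (p + 1) * (1 - Real.sqrt (1 - (p + 1) ^ 2 * ω / p))) ^ (1 / (p - 1)))
    (hc : c = ((1 + Real.sqrt (1 - 4 * ω)) / 2) ^ (1 / (p - 1))) :
    ∀ u ∈ Set.Ioo β c, f' u * (u - β) - f u < 0 :=
  k_neg_general p ω hp hω₁ hω₂ f f' hf hf' β c hβ
end

section
/- Let p > 1 and a_p ≤ ω < ω_p, where ω_p = p/(p+1)² and a_p = p(7p−5)/(4(p+1)(2p−1)²). Then the function G(u) = f(u)/(u−β) is nonincreasing on the open interval (β, c) (hypothesis (H3)), where β = ((p/(p+1))·(1−√(1−(p+1)²ω/p)))^{1/(p−1)} and c = ((1+√(1−4ω))/2)^{1/(p−1)}. -/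
open Real Set

/-!
With `t = u ^ (p - 1)` one has `f u = u * (-ω + t - t ^ 2)` and
`f' u = -ω + p * t - (2 * p - 1) * t ^ 2`, a downward parabola in the increasing variable `t`.
The lower bound `a_p ≤ ω` is what puts `β ^ (p - 1)` past its vertex `p / (2 * (2 * p - 1))`,
so `f` is concave on `[β, ∞)`; and `f β ≥ 0` because `β ^ (p - 1)` lies between the roots
of `-ω + t - t ^ 2`. Hence `f u / (u - β) = (f u - f β) / (u - β) + f β / (u - β)` is a secant
slope of a concave function plus a nonnegative multiple of `1 / (u - β)`, both antitone.
-/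

theorem ConcaveOn.antitoneOn_div_sub {𝕜 : Type*} [Field 𝕜] [LinearOrder 𝕜]
    [IsStrictOrderedRing 𝕜] {F : 𝕜 → 𝕜} {a : 𝕜} (hF : ConcaveOn 𝕜 (Ici a) F) (ha : 0 ≤ F a) :
    AntitoneOn (fun x => F x / (x - a)) (Ioi a) := by
  have hslope : AntitoneOn (slope F a) (Ioi a) :=
    (hF.antitoneOn_slope_gt self_mem_Ici).mono fun x hx => ⟨le_of_lt hx, hx⟩
  have hpole : AntitoneOn (fun x => F a / (x - a)) (Ioi a) := fun x hx y _ hxy =>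
    div_le_div_of_nonneg_left ha (sub_pos.2 hx) (sub_le_sub_right hxy a)
  refine (hslope.add hpole).congr fun x _ => ?_
  simp only [slope_def_field]
  ring

theorem antitoneOn_quadratic {a : ℝ} (ha : 0 < a) (b c : ℝ) :
    AntitoneOn (fun t => c + b * t - a * t ^ 2) (Ici (b / (2 * a))) := by
  intro s hs t ht hst
  rw [mem_Ici, div_le_iff₀ (by positivity)] at hs ht
  nlinarith [mul_le_mul_of_nonneg_left (add_le_add hs ht) (sub_nonneg.2 hst)]

theorem rpow_two_mul_sub_two {u : ℝ} (hu : 0 ≤ u) (p : ℝ) :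
    u ^ (2 * p - 2) = (u ^ (p - 1)) ^ 2 := by
  rw [← rpow_natCast, ← rpow_mul hu]
  ring_nf

noncomputable def doublePower (ω p u : ℝ) : ℝ := -ω * u + u ^ p - u ^ (2 * p - 1)

section doublePower

variable {ω p u : ℝ}

theorem doublePower_eq_mul (hu : 0 < u) :
    doublePower ω p u = u * (-ω + u ^ (p - 1) - (u ^ (p - 1)) ^ 2) := by
  rw [doublePower, ← rpow_two_mul_sub_two hu.le, show 2 * p - 2 = 2 * p - 1 - 1 by ring,
    rpow_sub_one hu.ne' (2 * p - 1), rpow_sub_one hu.ne' p]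
  field_simp

theorem hasDerivAt_doublePower (hu : 0 < u) :
    HasDerivAt (doublePower ω p) (-ω + p * u ^ (p - 1) - (2 * p - 1) * (u ^ (p - 1)) ^ 2) u := by
  have h := (((hasDerivAt_id u).const_mul (-ω)).add
    (hasDerivAt_rpow_const (p := p) (Or.inl hu.ne'))).sub
    (hasDerivAt_rpow_const (p := 2 * p - 1) (Or.inl hu.ne'))
  rwa [show 2 * p - 1 - 1 = 2 * p - 2 by ring, rpow_two_mul_sub_two hu.le, mul_one] at h

theorem concaveOn_doublePower {β : ℝ} (hp : 1 ≤ p) (hβ : 0 < β)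
    (hβp : p / (2 * (2 * p - 1)) ≤ β ^ (p - 1)) : ConcaveOn ℝ (Ici β) (doublePower ω p) := by
  have hderiv : ∀ u ∈ Ici β, HasDerivAt (doublePower ω p)
      (-ω + p * u ^ (p - 1) - (2 * p - 1) * (u ^ (p - 1)) ^ 2) u :=
    fun u hu => hasDerivAt_doublePower (hβ.trans_le hu)
  have hmono : MonotoneOn (fun u : ℝ => u ^ (p - 1)) (Ici β) := fun x hx y _ hxy =>
    rpow_le_rpow (hβ.le.trans hx) hxy (by linarith)
  refine AntitoneOn.concaveOn_of_deriv (convex_Ici β)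
    (fun u hu => (hderiv u hu).continuousAt.continuousWithinAt) ?_ ?_ <;> rw [interior_Ici]
  · exact fun u hu => (hderiv u (Ioi_subset_Ici_self hu)).differentiableAt.differentiableWithinAt
  · intro x hx y hy hxy
    replace hx := Ioi_subset_Ici_self hx
    replace hy := Ioi_subset_Ici_self hy
    rw [(hderiv x hx).deriv, (hderiv y hy).deriv]
    exact antitoneOn_quadratic (by linarith) p (-ω) (hβp.trans (hmono self_mem_Ici hx hx))
      (hβp.trans (hmono self_mem_Ici hy hy)) (hmono hx hy hxy)

end doublePower

/-- `betaPow p ω` is `β ^ (p - 1)`. -/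
noncomputable def betaPow (p ω : ℝ) : ℝ := p / (p + 1) * (1 - √(1 - (p + 1) ^ 2 * ω / p))

section betaPow

variable {p ω : ℝ}

theorem betaPow_pos (hp : 0 < p) (hω : 0 < ω) : 0 < betaPow p ω := by
  have hsqrt : √(1 - (p + 1) ^ 2 * ω / p) < 1 := by
    rw [sqrt_lt' one_pos]
    have : 0 < (p + 1) ^ 2 * ω / p := by positivity
    linarith
  have := sub_pos.2 hsqrt
  have : 0 < p + 1 := by linarith
  unfold betaPow
  positivity

theorem mul_sq_sqrt_discriminant (hp : 0 < p) (hωp : ω ≤ p / (p + 1) ^ 2) :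
    p * √(1 - (p + 1) ^ 2 * ω / p) ^ 2 = p - (p + 1) ^ 2 * ω := by
  rw [sq_sqrt (sub_nonneg.2 ?_)]
  · field_simp
  rw [div_le_one hp, ← le_div_iff₀' (by positivity)]
  exact hωp

theorem le_betaPow_sub_sq (hp : 1 ≤ p) (hω : 0 ≤ ω) (hωp : ω ≤ p / (p + 1) ^ 2) :
    ω ≤ betaPow p ω - betaPow p ω ^ 2 := by
  have hp0 : 0 < p := by linarith
  have hD2 := mul_sq_sqrt_discriminant hp0 hωp
  unfold betaPow
  set D := √(1 - (p + 1) ^ 2 * ω / p)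
  have hD0 : 0 ≤ D := sqrt_nonneg _
  have hD1 : D ≤ 1 := by
    have : D ^ 2 ≤ 1 :=
      le_of_mul_le_mul_left (by nlinarith [mul_nonneg (sq_nonneg (p + 1)) hω]) hp0
    nlinarith
  have hgap : p / (p + 1) * (1 - D) - (p / (p + 1) * (1 - D)) ^ 2 - ω
      = p * (p - 1) * (D * (1 - D)) / (p + 1) ^ 2 := by
    field_simp
    linear_combination (-1) * hD2
  have : 0 ≤ p * (p - 1) * (D * (1 - D)) / (p + 1) ^ 2 := by
    have := sub_nonneg.2 hp
    have := sub_nonneg.2 hD1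
    positivity
  linarith

theorem div_le_betaPow (hp : 1 ≤ p)
    (hω : p * (7 * p - 5) / (4 * (p + 1) * (2 * p - 1) ^ 2) ≤ ω) (hωp : ω ≤ p / (p + 1) ^ 2) :
    p / (2 * (2 * p - 1)) ≤ betaPow p ω := by
  have hp0 : 0 < p := by linarith
  have h2p : 0 < 2 * p - 1 := by linarith
  have hD2 := mul_sq_sqrt_discriminant hp0 hωp
  rw [div_le_iff₀ (by positivity)] at hω
  unfold betaPow
  set D := √(1 - (p + 1) ^ 2 * ω / p)
  -- `4 (2p-1)² - 9 (p-1)² = (p+1)(7p-5)`, so this is where `a_p ≤ ω` enters.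
  have hDsq : (2 * (2 * p - 1) * D) ^ 2 ≤ (3 * (p - 1)) ^ 2 := by nlinarith
  have hD : 2 * (2 * p - 1) * D ≤ 3 * (p - 1) :=
    (pow_le_pow_iff_left₀ (by positivity) (by linarith) two_ne_zero).1 hDsq
  rw [div_le_iff₀ (by positivity), div_mul_eq_mul_div, div_mul_eq_mul_div,
    le_div_iff₀ (by linarith)]
  nlinarith

end betaPow

theorem G_antitoneOn_general (p ω : ℝ) (hp : 1 < p)
    (hω₁ : p * (7 * p - 5) / (4 * (p + 1) * (2 * p - 1) ^ 2) ≤ ω)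
    (hω₂ : ω < p / (p + 1) ^ 2)
    (f : ℝ → ℝ)
    (hf : ∀ u > (0 : ℝ), f u = -ω * u + u ^ p - u ^ (2 * p - 1))
    (β c : ℝ)
    (hβ : β = (p / (p + 1) * (1 - Real.sqrt (1 - (p + 1) ^ 2 * ω / p))) ^ (1 / (p - 1))) :
    AntitoneOn (fun u => f u / (u - β)) (Set.Ioo β c) := by
  have hω : 0 < ω := (div_pos (by nlinarith) (by nlinarith)).trans_le hω₁
  have hB : 0 < betaPow p ω := betaPow_pos (by linarith) hω
  replace hβ : β = betaPow p ω ^ (p - 1)⁻¹ := by rw [hβ, one_div]; rfl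
  have hβ0 : 0 < β := hβ ▸ rpow_pos_of_pos hB _
  have hβB : β ^ (p - 1) = betaPow p ω := by
    rw [hβ, rpow_inv_rpow hB.le (by linarith)]
  have hconc : ConcaveOn ℝ (Ici β) (doublePower ω p) :=
    concaveOn_doublePower hp.le hβ0 (hβB ▸ div_le_betaPow hp.le hω₁ hω₂.le)
  have hfβ : 0 ≤ doublePower ω p β := by
    rw [doublePower_eq_mul hβ0, hβB]
    exact mul_nonneg hβ0.le (by linarith [le_betaPow_sub_sq hp.le hω.le hω₂.le])
  refine ((hconc.antitoneOn_div_sub hfβ).mono Ioo_subset_Ioi_self).congr fun u hu => ?_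
  simp only [hf u (hβ0.trans hu.1), doublePower]

/-- For `p > 1` and `a_p ≤ ω < ω_p`: `G(u) = f(u)/(u - β)` is nonincreasing on `(β, c)` (H3). -/
theorem G_antitoneOn (p ω : ℝ) (hp : 1 < p)
    (hω₁ : p * (7 * p - 5) / (4 * (p + 1) * (2 * p - 1) ^ 2) ≤ ω)
    (hω₂ : ω < p / (p + 1) ^ 2)
    (f : ℝ → ℝ)
    (hf : ∀ u > (0 : ℝ), f u = -ω * u + u ^ p - u ^ (2 * p - 1))
    (β c : ℝ)
    (hβ : β = (p / (p + 1) * (1 - Real.sqrt (1 - (p + 1) ^ 2 * ω / p))) ^ (1 / (p - 1)))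
    (hc : c = ((1 + Real.sqrt (1 - 4 * ω)) / 2) ^ (1 / (p - 1))) :
    AntitoneOn (fun u => f u / (u - β)) (Set.Ioo β c) :=
  G_antitoneOn_general p ω hp hω₁ hω₂ f hf β c hβ
end

section
/- Let p > 1 and 0 < ω < ω_p, where ω_p = p/(p+1)², and define k(u) = f'(u)·(u−β) − f(u) on (0,∞). Then k is differentiable on (0,∞) with k'(u) = f''(u)·(u−β); moreover, if α ≤ β, then k is strictly decreasing on the interval (β, c), where α = (p/(2(2p−1)))^{1/(p−1)}, β = ((p/(p+1))·(1−√(1−(p+1)²ω/p)))^{1/(p−1)}, and c = ((1+√(1−4ω))/2)^{1/(p−1)}. -/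
/-!
Differentiating `k = f' · (u - β) - f`, the two terms `f'` cancel, leaving `f'' · (u - β)`. Writing
`f''(u) = (p - 1) u^(p-2) (p - 2(2p - 1) u^(p-1))`, one sees that `f'' < 0` exactly when
`u > α`; so if `α ≤ β`, then `k' < 0` on `(β, ∞)`, which contains `(β, c)`.
-/

open Real Set Filter Topology

theorem hasDerivAt_deriv_mul_sub_sub {f : ℝ → ℝ} {u : ℝ} (β : ℝ) (hf : DifferentiableAt ℝ f u)
    (hf' : DifferentiableAt ℝ (deriv f) u) :
    HasDerivAt (fun v => deriv f v * (v - β) - f v) (deriv (deriv f) u * (u - β)) u :=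
  ((hf'.hasDerivAt.mul ((hasDerivAt_id' u).sub_const β)).sub hf.hasDerivAt).congr_deriv
    (by ring)

section Profile

variable {f : ℝ → ℝ} {ω p u : ℝ}

theorem hasDerivAt_of_eq_profile (hf : ∀ u > (0 : ℝ), f u = -ω * u + u ^ p - u ^ (2 * p - 1))
    (hu : 0 < u) :
    HasDerivAt f (-ω + p * u ^ (p - 1) - (2 * p - 1) * u ^ (2 * p - 2)) u := by
  have hlin : HasDerivAt (fun x : ℝ => -ω * x) (-ω) u := by
    simpa using (hasDerivAt_id u).const_mul (-ω)
  have h := (hlin.add (hasDerivAt_rpow_const (p := p) (Or.inl hu.ne'))).sub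
    (hasDerivAt_rpow_const (p := 2 * p - 1) (Or.inl hu.ne'))
  rw [show 2 * p - 1 - 1 = 2 * p - 2 by ring] at h
  exact h.congr_of_eventuallyEq (eventuallyEq_of_mem (Ioi_mem_nhds hu) hf)

theorem hasDerivAt_deriv_of_eq_profile
    (hf : ∀ u > (0 : ℝ), f u = -ω * u + u ^ p - u ^ (2 * p - 1)) (hu : 0 < u) :
    HasDerivAt (deriv f) ((p - 1) * u ^ (p - 2) * (p - 2 * (2 * p - 1) * u ^ (p - 1))) u := by
  have h := ((hasDerivAt_rpow_const (p := p - 1) (Or.inl hu.ne')).const_mul p).sub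
    ((hasDerivAt_rpow_const (p := 2 * p - 2) (Or.inl hu.ne')).const_mul (2 * p - 1))
    |>.const_add (-ω)
  have hsplit : u ^ (2 * p - 2 - 1) = u ^ (p - 2) * u ^ (p - 1) := by
    rw [← rpow_add hu]; ring_nf
  rw [show p - 1 - 1 = p - 2 by ring, hsplit] at h
  refine (h.congr_deriv (by ring)).congr_of_eventuallyEq ?_
  refine eventuallyEq_of_mem (Ioi_mem_nhds hu) fun v hv => ?_
  simp only [(hasDerivAt_of_eq_profile hf hv).deriv, add_sub_assoc, Pi.sub_apply]

theorem deriv_deriv_neg_of_eq_profile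
    (hf : ∀ u > (0 : ℝ), f u = -ω * u + u ^ p - u ^ (2 * p - 1)) (hp : 1 < p)
    (hu : (p / (2 * (2 * p - 1))) ^ (1 / (p - 1)) < u) : deriv (deriv f) u < 0 := by
  have hbase : 0 < p / (2 * (2 * p - 1)) := by apply div_pos <;> linarith
  have hu0 : 0 < u := (rpow_pos_of_pos hbase _).trans hu
  rw [one_div, rpow_inv_lt_iff_of_pos hbase.le hu0.le (by linarith),
    div_lt_iff₀ (by linarith)] at hu
  rw [(hasDerivAt_deriv_of_eq_profile hf hu0).deriv]
  exact mul_neg_of_pos_of_neg (mul_pos (by linarith) (rpow_pos_of_pos hu0 _)) (by linarith)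

end Profile

theorem k_deriv_and_strictAnti_general (p ω : ℝ) (hp : 1 < p)
    (f : ℝ → ℝ)
    (hf : ∀ u > (0 : ℝ), f u = -ω * u + u ^ p - u ^ (2 * p - 1))
    (α β c : ℝ)
    (hα : α = (p / (2 * (2 * p - 1))) ^ (1 / (p - 1)))
    (k : ℝ → ℝ) (hk : ∀ u > (0 : ℝ), k u = deriv f u * (u - β) - f u) :
    (∀ u > (0 : ℝ), HasDerivAt k (deriv (deriv f) u * (u - β)) u) ∧
    (α ≤ β → StrictAntiOn k (Set.Ioo β c)) := by
  have hk' : ∀ u > (0 : ℝ), HasDerivAt k (deriv (deriv f) u * (u - β)) u := fun u hu =>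
    (hasDerivAt_deriv_mul_sub_sub β (hasDerivAt_of_eq_profile hf hu).differentiableAt
      (hasDerivAt_deriv_of_eq_profile hf hu).differentiableAt).congr_of_eventuallyEq
      (eventuallyEq_of_mem (Ioi_mem_nhds hu) hk)
  refine ⟨hk', fun hαβ => ?_⟩
  have hβ0 : 0 < β := hαβ.trans_lt' (hα ▸ rpow_pos_of_pos (by apply div_pos <;> linarith) _)
  refine strictAntiOn_of_hasDerivWithinAt_neg (convex_Ioo β c)
    (fun u hu => (hk' u (hβ0.trans hu.1)).continuousAt.continuousWithinAt)
    (fun u hu => (hk' u (hβ0.trans (interior_subset hu).1)).hasDerivWithinAt) fun u hu => ?_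
  rw [interior_Ioo] at hu
  exact mul_neg_of_neg_of_pos
    (deriv_deriv_neg_of_eq_profile hf hp (hα ▸ hαβ.trans_lt hu.1)) (sub_pos.2 hu.1)

/-- For `p > 1` and `0 < ω < ω_p`: `k(u) = f'(u)(u - β) - f(u)` is differentiable on `(0,∞)`
with `k'(u) = f''(u)(u - β)` (here `f'`, `f''` are the derivatives of `f`); moreover, if
`α ≤ β` then `k` is strictly decreasing on `(β, c)`. -/
theorem k_deriv_and_strictAnti (p ω : ℝ) (hp : 1 < p) (hω : 0 < ω)
    (hωp : ω < p / (p + 1) ^ 2)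
    (f : ℝ → ℝ)
    (hf : ∀ u > (0 : ℝ), f u = -ω * u + u ^ p - u ^ (2 * p - 1))
    (α β c : ℝ)
    (hα : α = (p / (2 * (2 * p - 1))) ^ (1 / (p - 1)))
    (hβ : β = (p / (p + 1) * (1 - Real.sqrt (1 - (p + 1) ^ 2 * ω / p))) ^ (1 / (p - 1)))
    (hc : c = ((1 + Real.sqrt (1 - 4 * ω)) / 2) ^ (1 / (p - 1)))
    (k : ℝ → ℝ) (hk : ∀ u > (0 : ℝ), k u = deriv f u * (u - β) - f u) :
    (∀ u > (0 : ℝ), HasDerivAt k (deriv (deriv f) u * (u - β)) u) ∧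
    (α ≤ β → StrictAntiOn k (Set.Ioo β c)) :=
  k_deriv_and_strictAnti_general p ω hp f hf α β c hα k hk
end

section
/- Let p > 1 and 0 < ω < ω_p, where ω_p = p/(p+1)². Then α − f(α)/f'(α) = (p−1)·α^p·(1−2α^{p−1}) / (−ω + p·α^{p−1} − (2p−1)·α^{2(p−1)}), and this quantity satisfies α − f(α)/f'(α) > (p−1)·α^p·(1−2α^{p−1}) / (p·α^{p−1} − (2p−1)·α^{2(p−1)}) > 0, where α = (p/(2(2p−1)))^{1/(p−1)} and f'(u) = −ω + p·u^{p−1} − (2p−1)·u^{2(p−1)}. -/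
open Real

/-! Since `u * f' u - f u = (p - 1) u^p (1 - 2 u^(p-1))` for every `u > 0`, the identity holds
wherever `f'` does not vanish. At `α` we have `α^(p-1) = p / (2(2p-1)) < 1/2`, the vertex of
`t ↦ p t - (2p-1) t²`, so `f' α = p² / (4(2p-1)) - ω`; the hypothesis `ω < p / (p+1)²` keeps this
positive, and `ω > 0` makes it smaller than `p² / (4(2p-1))`. -/

theorem mul_div_two_mul_sub_mul_sq {a b : ℝ} (hb : b ≠ 0) :
    a * (a / (2 * b)) - b * (a / (2 * b)) ^ 2 = a ^ 2 / (4 * b) := by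
  field_simp
  ring

theorem div_add_one_sq_le_sq_div_four_mul {p : ℝ} (hp : 1 / 2 < p) :
    p / (p + 1) ^ 2 ≤ p ^ 2 / (4 * (2 * p - 1)) := by
  rw [div_le_div_iff₀ (by positivity) (by linarith)]
  have key : p ^ 2 * (p + 1) ^ 2 - p * (4 * (2 * p - 1)) = p * ((p - 1) ^ 2 * (p + 4)) := by ring
  have : 0 ≤ p * ((p - 1) ^ 2 * (p + 4)) := by
    have : 0 ≤ p + 4 := by linarith
    positivity
  linarith

theorem rpow_two_mul {x : ℝ} (hx : 0 ≤ x) (y : ℝ) : x ^ (2 * y) = (x ^ y) ^ 2 := by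
  rw [mul_comm, ← Nat.cast_ofNat, rpow_mul_natCast hx]

theorem newton_step_eq {p ω u : ℝ} {f f' : ℝ → ℝ}
    (hf : ∀ u > (0 : ℝ), f u = -ω * u + u ^ p - u ^ (2 * p - 1))
    (hf' : ∀ u > (0 : ℝ), f' u = -ω + p * u ^ (p - 1) - (2 * p - 1) * u ^ (2 * (p - 1)))
    (hu : 0 < u) (hf'u : f' u ≠ 0) :
    u - f u / f' u = (p - 1) * u ^ p * (1 - 2 * u ^ (p - 1)) / f' u := by
  have h_sq : u ^ (2 * (p - 1)) = (u ^ (p - 1)) ^ 2 := rpow_two_mul hu.le (p - 1)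
  have h_p : u ^ p = u * u ^ (p - 1) := by rw [rpow_sub_one hu.ne', mul_div_cancel₀ _ hu.ne']
  have h_two_p : u ^ (2 * p - 1) = u * (u ^ (p - 1)) ^ 2 := by
    rw [← h_sq, show 2 * p - 1 = 1 + 2 * (p - 1) by ring, rpow_add hu, rpow_one]
  have h_mul_deriv : u * f' u - f u = (p - 1) * u ^ p * (1 - 2 * u ^ (p - 1)) := by
    rw [hf u hu, hf' u hu, h_two_p, h_sq, h_p]
    ring
  rw [← h_mul_deriv, sub_div, mul_div_cancel_right₀ _ hf'u]

/-- For `p > 1` and `0 < ω < ω_p`: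
`α - f(α)/f'(α) = (p-1) α^p (1 - 2 α^(p-1)) / (-ω + p α^(p-1) - (2p-1) α^(2(p-1)))`, and
this quantity is `> (p-1) α^p (1 - 2 α^(p-1)) / (p α^(p-1) - (2p-1) α^(2(p-1))) > 0`. -/
theorem alpha_sub_f_div_f' (p ω : ℝ) (hp : 1 < p) (hω : 0 < ω)
    (hωp : ω < p / (p + 1) ^ 2)
    (f f' : ℝ → ℝ)
    (hf : ∀ u > (0 : ℝ), f u = -ω * u + u ^ p - u ^ (2 * p - 1))
    (hf' : ∀ u > (0 : ℝ), f' u = -ω + p * u ^ (p - 1) - (2 * p - 1) * u ^ (2 * (p - 1)))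
    (α : ℝ) (hα : α = (p / (2 * (2 * p - 1))) ^ (1 / (p - 1))) :
    α - f α / f' α
      = (p - 1) * α ^ p * (1 - 2 * α ^ (p - 1))
        / (-ω + p * α ^ (p - 1) - (2 * p - 1) * α ^ (2 * (p - 1))) ∧
    (p - 1) * α ^ p * (1 - 2 * α ^ (p - 1))
        / (p * α ^ (p - 1) - (2 * p - 1) * α ^ (2 * (p - 1)))
      < α - f α / f' α ∧
    0 < (p - 1) * α ^ p * (1 - 2 * α ^ (p - 1))
        / (p * α ^ (p - 1) - (2 * p - 1) * α ^ (2 * (p - 1))) := by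
  set A := p / (2 * (2 * p - 1)) with hA
  have hA_pos : 0 < A := by rw [hA]; exact div_pos (by linarith) (by linarith)
  have hA_lt : A < 1 / 2 := by
    rw [hA, div_lt_div_iff₀ (by linarith) two_pos]
    linarith
  have hα_pos : 0 < α := by rw [hα]; positivity
  have hαA : α ^ (p - 1) = A := by
    rw [hα, one_div, rpow_inv_rpow hA_pos.le (by linarith)]
  have hαA_sq : α ^ (2 * (p - 1)) = A ^ 2 := by
    rw [rpow_two_mul hα_pos.le, hαA]
  have h_vertex : p * A - (2 * p - 1) * A ^ 2 = p ^ 2 / (4 * (2 * p - 1)) :=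
    mul_div_two_mul_sub_mul_sq (by linarith)
  have h_denom_pos : 0 < -ω + p * A - (2 * p - 1) * A ^ 2 := by
    linarith [div_add_one_sq_le_sq_div_four_mul (p := p) (by linarith)]
  have h_numer_pos : 0 < (p - 1) * α ^ p * (1 - 2 * A) := by
    have : 0 < p - 1 := by linarith
    have : 0 < 1 - 2 * A := by linarith
    positivity
  have hf'α := hf' α hα_pos
  have hf'A : f' α = -ω + p * A - (2 * p - 1) * A ^ 2 := by rw [hf'α, hαA, hαA_sq]
  rw [newton_step_eq hf hf' hα_pos (hf'A ▸ h_denom_pos.ne'), ← hf'α, hf'A, hαA, hαA_sq]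
  exact ⟨rfl, div_lt_div_of_pos_left h_numer_pos h_denom_pos (by linarith),
    div_pos h_numer_pos (by linarith)⟩
end

section
/- Let p > 1. There exists ω₀ with 0 < ω₀ < ω_p = p/(p+1)² such that for every ω with 0 < ω < ω₀ one has α − f(α)/f'(α) > β; that is, for ω close to zero the condition α − f(α)/f'(α) ≤ β fails. Here α = (p/(2(2p−1)))^{1/(p−1)}, β = ((p/(p+1))·(1−√(1−(p+1)²ω/p)))^{1/(p−1)}, and f'(u) = −ω + p·u^{p−1} − (2p−1)·u^{2(p−1)}. -/
open Real Set Filter Topology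

/-!
At `α` we have `α ^ (p - 1) = a` with `a = p / (2 (2p - 1)) ∈ (0, 1/2)`, so the Newton step
`α - f(α)/f'(α)` is the rational function `α - α (a - a² - ω) / (p a - (2p - 1) a² - ω)` of `ω`.
Its value at `ω = 0` is positive exactly because `a < 1/2`, while `β(ω) → 0` as `ω → 0`; by
continuity the strict inequality persists on a right neighbourhood of `0`.
-/

lemma exists_forall_Ioo_of_eventually_nhdsGT {X : Type*} [TopologicalSpace X] [LinearOrder X]
    [OrderTopology X] [DenselyOrdered X] [NoMaxOrder X] {P : X → Prop} {a b : X}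
    (h : ∀ᶠ x in 𝓝[>] a, P x) (hab : a < b) :
    ∃ c, a < c ∧ c < b ∧ ∀ x, a < x → x < c → P x := by
  obtain ⟨u, hau, hu⟩ := mem_nhdsGT_iff_exists_Ioo_subset.mp h
  obtain ⟨c, hac, hc⟩ := exists_between (lt_min (mem_Ioi.mp hau) hab)
  exact ⟨c, hac, hc.trans_le (min_le_right _ _), fun x hax hxc =>
    hu ⟨hax, hxc.trans (hc.trans_le (min_le_left _ _))⟩⟩

lemma neg_mul_add_rpow_sub_rpow_eq {u : ℝ} (hu : 0 < u) (ω p : ℝ) :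
    -ω * u + u ^ p - u ^ (2 * p - 1) = u * (u ^ (p - 1) - (u ^ (p - 1)) ^ 2 - ω) := by
  have hp : u ^ p = u ^ (p - 1) * u := by
    rw [← Real.rpow_add_one hu.ne', sub_add_cancel]
  have h2p : u ^ (2 * p - 1) = (u ^ (p - 1)) ^ 2 * u := by
    rw [← Real.rpow_mul_natCast hu.le, ← Real.rpow_add_one hu.ne']
    ring_nf
  rw [hp, h2p]
  ring

lemma rpow_two_mul_eq_sq {u : ℝ} (hu : 0 ≤ u) (q : ℝ) : u ^ (2 * q) = (u ^ q) ^ 2 := by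
  rw [mul_comm, ← Real.rpow_mul_natCast hu, Nat.cast_ofNat]

lemma tendsto_rpow_mul_one_sub_sqrt_one_sub {ι : Type*} {l : Filter ι} {g : ι → ℝ}
    (hg : Tendsto g l (𝓝 0)) (c : ℝ) {e : ℝ} (he : 0 < e) :
    Tendsto (fun i => (c * (1 - √(1 - g i))) ^ e) l (𝓝 0) := by
  have hcont : Continuous fun t : ℝ => (c * (1 - √(1 - t))) ^ e :=
    (continuous_const.mul (continuous_const.sub
      (continuous_const.sub continuous_id).sqrt)).rpow_const fun _ => Or.inr he.le
  simpa [Function.comp_def, Real.zero_rpow he.ne'] using (hcont.tendsto 0).comp hg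

lemma eventually_lt_newton_step {p a u : ℝ} (hp : 1 < p) (ha : 0 < a) (ha2 : a < 1 / 2)
    (hu : 0 < u) {g : ℝ → ℝ} (hg : Tendsto g (𝓝 0) (𝓝 0)) :
    ∀ᶠ ω in 𝓝 0, g ω < u - u * (a - a ^ 2 - ω) / (p * a - (2 * p - 1) * a ^ 2 - ω) := by
  have hden : 0 < p * a - (2 * p - 1) * a ^ 2 := by
    nlinarith [mul_pos (mul_pos ha (by linarith : (0 : ℝ) < 2 * p - 1)) (sub_pos.mpr ha2)]
  have hnum : a - a ^ 2 < p * a - (2 * p - 1) * a ^ 2 := by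
    nlinarith [mul_pos (mul_pos (sub_pos.mpr hp) ha) (sub_pos.mpr ha2)]
  have hcont : ContinuousAt
      (fun ω => u - u * (a - a ^ 2 - ω) / (p * a - (2 * p - 1) * a ^ 2 - ω)) 0 :=
    continuousAt_const.sub ((continuousAt_const.mul (continuousAt_const.sub continuousAt_id)).div
      (continuousAt_const.sub continuousAt_id) (by simpa using hden.ne'))
  refine hg.eventually_lt hcont.tendsto ?_
  simp only [sub_zero]
  have : u * (a - a ^ 2) / (p * a - (2 * p - 1) * a ^ 2) < u := by
    rw [div_lt_iff₀ hden]
    exact mul_lt_mul_of_pos_left hnum hu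
  linarith

/-- For `p > 1`, there exists `ω₀ ∈ (0, ω_p)` such that for every `ω ∈ (0, ω₀)` one has
`α - f(α)/f'(α) > β(ω)`; that is, for `ω` close to `0` the condition
`α - f(α)/f'(α) ≤ β` fails. -/
theorem condition_fails_near_zero (p : ℝ) (hp : 1 < p)
    (f f' : ℝ → ℝ → ℝ)
    (hf : ∀ ω : ℝ, ∀ u > (0 : ℝ), f ω u = -ω * u + u ^ p - u ^ (2 * p - 1))
    (hf' : ∀ ω : ℝ, ∀ u > (0 : ℝ),
        f' ω u = -ω + p * u ^ (p - 1) - (2 * p - 1) * u ^ (2 * (p - 1)))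
    (α : ℝ) (hα : α = (p / (2 * (2 * p - 1))) ^ (1 / (p - 1)))
    (β : ℝ → ℝ)
    (hβ : ∀ ω : ℝ, β ω
        = (p / (p + 1) * (1 - Real.sqrt (1 - (p + 1) ^ 2 * ω / p))) ^ (1 / (p - 1))) :
    ∃ ω₀ : ℝ, 0 < ω₀ ∧ ω₀ < p / (p + 1) ^ 2 ∧
      ∀ ω : ℝ, 0 < ω → ω < ω₀ → β ω < α - f ω α / f' ω α := by
  have hp0 : 0 < p := by linarith
  have h2p : 0 < 2 * p - 1 := by linarith
  set a := p / (2 * (2 * p - 1))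
  have ha : 0 < a := by positivity
  have ha2 : a < 1 / 2 := by
    rw [div_lt_div_iff₀ (by positivity) two_pos]
    linarith
  have hα_pos : 0 < α := hα ▸ Real.rpow_pos_of_pos ha _
  have hαa : α ^ (p - 1) = a := by
    rw [hα, one_div, Real.rpow_inv_rpow ha.le (by linarith)]
  have hβ_lim : Tendsto β (𝓝 0) (𝓝 0) := by
    rw [funext hβ]
    refine tendsto_rpow_mul_one_sub_sqrt_one_sub ?_ _ (one_div_pos.mpr (sub_pos.mpr hp))
    simpa using ((continuous_const.mul continuous_id).div_const p).tendsto (0 : ℝ)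
  have hev : ∀ᶠ ω in 𝓝 0, β ω < α - f ω α / f' ω α := by
    filter_upwards [eventually_lt_newton_step hp ha ha2 hα_pos hβ_lim] with ω hω
    rwa [hf ω α hα_pos, hf' ω α hα_pos, neg_mul_add_rpow_sub_rpow_eq hα_pos,
      rpow_two_mul_eq_sq hα_pos.le, hαa, show -ω + p * a - (2 * p - 1) * a ^ 2
        = p * a - (2 * p - 1) * a ^ 2 - ω by ring]
  exact exists_forall_Ioo_of_eventually_nhdsGT (nhdsWithin_le_nhds hev) (by positivity)
end
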